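/- Let ξ : 𝔅 → ℝ be of the form ξ(b) = E[κ(X)·(1[X'b > 0] - 1[X'β > 0])] where X is a random vector in ℝ^K and κ is a measurable function such that κ(x) > 0 when x'β > 0, κ(x) < 0 when x'β < 0, and κ(x) = 0 when x'β = 0 (almost surely in X). Then ξ(b) ≤ 0 for every b, with ξ(β) = 0; i.e., β maximizes ξ over any set containing β. -/

import Mathlib

open MeasureTheory

/- The integrand is nonpositive pointwise: switching the indicator from `1[x'β > 0]` to
`1[x'b > 0]` can only add weight where `κ ≤ 0` and remove weight where `κ ≥ 0`. -/

lemma mul_sub_ite_pos_nonpos {k s a : ℝ} (hpos : 0 < s → 0 ≤ k) (hnonpos : s ≤ 0 → k ≤ 0)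
    (ha₀ : 0 ≤ a) (ha₁ : a ≤ 1) :
    k * (a - if 0 < s then 1 else 0) ≤ 0 := by
  by_cases hs : 0 < s
  · rw [if_pos hs]
    exact mul_nonpos_of_nonneg_of_nonpos (hpos hs) (by linarith)
  · rw [if_neg hs, sub_zero]
    exact mul_nonpos_of_nonpos_of_nonneg (hnonpos (not_lt.mp hs)) ha₀

lemma integral_mul_sub_ite_pos_nonpos {α : Type*} [MeasurableSpace α] {μ : Measure α}
    {κ s t : α → ℝ} (hsign : ∀ᵐ x ∂μ, (0 < s x → 0 ≤ κ x) ∧ (s x ≤ 0 → κ x ≤ 0)) :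
    ∫ x, κ x * ((if 0 < t x then (1:ℝ) else 0) - if 0 < s x then 1 else 0) ∂μ ≤ 0 := by
  refine integral_nonpos_of_ae ?_
  filter_upwards [hsign] with x ⟨hpos, hnonpos⟩
  exact mul_sub_ite_pos_nonpos hpos hnonpos (by split_ifs <;> norm_num)
    (by split_ifs <;> norm_num)

theorem stmt17_general (K : ℕ) (μ : Measure (Fin K → ℝ))
    (β : Fin K → ℝ) (κ : (Fin K → ℝ) → ℝ)
    (hsign : ∀ᵐ x ∂μ,
      (0 < ∑ i, x i * β i → 0 < κ x) ∧
      ((∑ i, x i * β i) < 0 → κ x < 0) ∧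
      ((∑ i, x i * β i) = 0 → κ x = 0))
    (ξ : (Fin K → ℝ) → ℝ)
    (hξ : ∀ b, ξ b = ∫ x, κ x * ((if 0 < ∑ i, x i * b i then (1:ℝ) else 0) -
             (if 0 < ∑ i, x i * β i then (1:ℝ) else 0)) ∂μ) :
    (∀ b, ξ b ≤ 0) ∧ ξ β = 0 := by
  have hsign' : ∀ᵐ x ∂μ, (0 < ∑ i, x i * β i → 0 ≤ κ x) ∧ (∑ i, x i * β i ≤ 0 → κ x ≤ 0) := by
    filter_upwards [hsign] with x ⟨hpos, hneg, hzero⟩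
    refine ⟨fun hs => (hpos hs).le, fun hs => ?_⟩
    rcases hs.lt_or_eq with hs | hs
    · exact (hneg hs).le
    · exact (hzero hs).le
  refine ⟨fun b => (hξ b).trans_le (integral_mul_sub_ite_pos_nonpos hsign'), ?_⟩
  simp [hξ β]

theorem stmt17 (K : ℕ) (μ : Measure (Fin K → ℝ)) [IsProbabilityMeasure μ]
    (β : Fin K → ℝ) (κ : (Fin K → ℝ) → ℝ)
    (hsign : ∀ᵐ x ∂μ,
      (0 < ∑ i, x i * β i → 0 < κ x) ∧
      ((∑ i, x i * β i) < 0 → κ x < 0) ∧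
      ((∑ i, x i * β i) = 0 → κ x = 0))
    (hint : ∀ b : Fin K → ℝ, Integrable (fun x =>
      κ x * ((if 0 < ∑ i, x i * b i then (1:ℝ) else 0) -
             (if 0 < ∑ i, x i * β i then (1:ℝ) else 0))) μ)
    (ξ : (Fin K → ℝ) → ℝ)
    (hξ : ∀ b, ξ b = ∫ x, κ x * ((if 0 < ∑ i, x i * b i then (1:ℝ) else 0) -
             (if 0 < ∑ i, x i * β i then (1:ℝ) else 0)) ∂μ) :
    (∀ b, ξ b ≤ 0) ∧ ξ β = 0 :=
  stmt17_general K μ β κ hsign ξ hξ
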